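/- arXiv:1605.04896 — 2 statements merged into one kernel-verified Lean document; each statement's English description precedes it below -/
import Mathlib

section
/- If 𝒜 is an A-valued function algebra on X and ℐ is an ideal in 𝒜 such that ℐ(x₀) and ℐ(x₁) are proper ideals of A for two distinct points x₀ ≠ x₁ of X, then ℐ is not a maximal ideal of 𝒜. -/
/-!
If `ℐ` is maximal and `ℐ(x)` is proper, then `ℐ(x)` is a maximal ideal of `A` and `ℐ` contains
every function vanishing at `x`. Separating `x₀` from `x₁` modulo `ℐ(x₀)` by some `f ∈ 𝒜`, the
function `f - f(x₁)` vanishes at `x₁`, so lies in `ℐ`, whence `f(x₀) - f(x₁) ∈ ℐ(x₀)`: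
a contradiction.
-/

variable {X : Type*} [TopologicalSpace X] [CompactSpace X] [T2Space X]
variable {A : Type*} [NormedCommRing A] [NormedAlgebra ℂ A] [CompleteSpace A] [Nontrivial A]

/-- Evaluation at a point, as a ring homomorphism on an `A`-valued function algebra
`𝒜 ⊆ C(X, A)`. -/
def evalHom (𝒜 : Subalgebra ℂ C(X, A)) (x : X) : ↥𝒜 →+* A where
  toFun f := (f : C(X, A)) x
  map_one' := rfl
  map_mul' _ _ := rfl
  map_zero' := rfl
  map_add' _ _ := rfl

theorem Ideal.IsMaximal.ker_le_of_map_ne_top {R S : Type*} [Ring R] [Ring S] {f : R →+* S}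
    {I : Ideal R} (hI : I.IsMaximal) (hmap : I.map f ≠ ⊤) :
    RingHom.ker f ≤ I := by
  have hcomap : I = (I.map f).comap f :=
    hI.eq_of_le (Ideal.comap_ne_top f hmap) Ideal.le_comap_map
  exact hcomap ▸ Ideal.ker_le_comap f

section FunctionAlgebra

variable {Y : Type*} [TopologicalSpace Y] {B : Type*} [NormedCommRing B] [NormedAlgebra ℂ B]
  {𝒜 : Subalgebra ℂ C(Y, B)}

theorem evalHom_surjective (hconst : ∀ b : B, ContinuousMap.const Y b ∈ 𝒜) (y : Y) :
    Function.Surjective (evalHom 𝒜 y) :=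
  fun b => ⟨⟨ContinuousMap.const Y b, hconst b⟩, rfl⟩

theorem coe_map_evalHom (hconst : ∀ b : B, ContinuousMap.const Y b ∈ 𝒜) (ℐ : Ideal ↥𝒜) (y : Y) :
    (ℐ.map (evalHom 𝒜 y) : Set B) = {b : B | ∃ f ∈ ℐ, (f : C(Y, B)) y = b} :=
  Set.ext fun _ => Ideal.mem_map_iff_of_surjective _ (evalHom_surjective hconst y)

theorem map_evalHom_ne_top (hconst : ∀ b : B, ContinuousMap.const Y b ∈ 𝒜) {ℐ : Ideal ↥𝒜}
    {y : Y} (h : {b : B | ∃ f ∈ ℐ, (f : C(Y, B)) y = b} ≠ Set.univ) :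
    ℐ.map (evalHom 𝒜 y) ≠ ⊤ := by
  rwa [Ne, ← SetLike.coe_set_eq, coe_map_evalHom hconst, Submodule.top_coe]

end FunctionAlgebra

/-- If ℐ is an ideal of 𝒜 such that ℐ(x₀) and ℐ(x₁) are proper for distinct x₀ ≠ x₁,
then ℐ is not maximal. -/
theorem stmt4 (𝒜 : Subalgebra ℂ C(X, A))
    (hconst : ∀ a : A, ContinuousMap.const X a ∈ 𝒜)
    (hsep : ∀ x y : X, x ≠ y → ∀ M : Ideal A, M.IsMaximal → ∃ f ∈ 𝒜, f x - f y ∉ M)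
    (ℐ : Ideal ↥𝒜) (x₀ x₁ : X) (hx : x₀ ≠ x₁)
    (h₀ : {a : A | ∃ f ∈ ℐ, (f : C(X, A)) x₀ = a} ≠ Set.univ)
    (h₁ : {a : A | ∃ f ∈ ℐ, (f : C(X, A)) x₁ = a} ≠ Set.univ) :
    ¬ ℐ.IsMaximal := by
  intro hmax
  have hM₀ : (ℐ.map (evalHom 𝒜 x₀)).IsMaximal :=
    (Ideal.map_eq_top_or_isMaximal_of_surjective _ (evalHom_surjective hconst x₀)
      hmax).resolve_left (map_evalHom_ne_top hconst h₀)
  obtain ⟨f, hf, hfM⟩ := hsep x₀ x₁ hx _ hM₀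
  let g : ↥𝒜 := ⟨f, hf⟩ - ⟨ContinuousMap.const X (f x₁), hconst _⟩
  have hg : g ∈ ℐ := hmax.ker_le_of_map_ne_top (map_evalHom_ne_top hconst h₁) (sub_self (f x₁))
  exact hfM (Ideal.mem_map_of_mem _ hg)
end

section
/- An A-valued function algebra 𝒜 on X is natural (every maximal ideal of 𝒜 has the form {f ∈ 𝒜 : f(x₀) ∈ M} for some x₀ ∈ X and maximal ideal M of A) if and only if for every proper ideal ℐ of 𝒜 there exists x₀ ∈ X with ℐ(x₀) ≠ A. -/
/-! Since `𝒜` contains the constants, evaluation at `x` is surjective onto `A`, so `ℐ(x)` is the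
ideal `ℐ.map (evalHom 𝒜 x)` of `A`. A maximal ideal `ℳ` of `𝒜` with `ℳ(x₀) ≠ A` is then the
pullback of any maximal ideal of `A` containing `ℳ(x₀)`; conversely, a proper ideal lies in a
maximal one, and if that is a pullback of `M` then `ℐ(x₀) ⊆ M`. -/

variable {X : Type*} [TopologicalSpace X] [CompactSpace X] [T2Space X]
variable {A : Type*} [NormedCommRing A] [NormedAlgebra ℂ A] [CompleteSpace A] [Nontrivial A]

theorem Ideal.map_ne_top_of_le_comap {R S : Type*} [CommRing R] [CommRing S] (f : R →+* S)
    {I : Ideal R} {M : Ideal S} (hM : M ≠ ⊤) (hI : I ≤ M.comap f) : I.map f ≠ ⊤ :=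
  ne_top_of_le_ne_top hM (Ideal.map_le_iff_le_comap.mpr hI)

theorem Ideal.exists_isMaximal_comap_eq_of_map_ne_top {R S : Type*} [CommRing R] [CommRing S]
    (f : R →+* S) {p : Ideal R} (hp : p.IsMaximal) (hmap : p.map f ≠ ⊤) :
    ∃ M : Ideal S, M.IsMaximal ∧ M.comap f = p := by
  obtain ⟨M, hM, hpM⟩ := Ideal.exists_le_maximal _ hmap
  exact ⟨M, hM, (hp.out.le_iff_eq (Ideal.comap_ne_top f hM.ne_top)).mp
    (Ideal.map_le_iff_le_comap.mp hpM)⟩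

section EvalHom

variable {X A : Type*} [TopologicalSpace X] [NormedCommRing A] [NormedAlgebra ℂ A]
  {𝒜 : Subalgebra ℂ C(X, A)}

theorem evalHom_surjective_s5 (hconst : ∀ a : A, ContinuousMap.const X a ∈ 𝒜) (x : X) :
    Function.Surjective (evalHom 𝒜 x) := fun a =>
  ⟨⟨ContinuousMap.const X a, hconst a⟩, rfl⟩

theorem map_evalHom_ne_top_iff (hconst : ∀ a : A, ContinuousMap.const X a ∈ 𝒜)
    (ℐ : Ideal 𝒜) (x : X) :
    ℐ.map (evalHom 𝒜 x) ≠ ⊤ ↔ {a : A | ∃ f ∈ ℐ, (f : C(X, A)) x = a} ≠ Set.univ := by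
  have hcoe : (ℐ.map (evalHom 𝒜 x) : Set A) = {a : A | ∃ f ∈ ℐ, (f : C(X, A)) x = a} :=
    Set.ext fun _ => Ideal.mem_map_iff_of_surjective _ (evalHom_surjective_s5 hconst x)
  rw [← hcoe, Ne, Ne, Submodule.coe_eq_univ]

end EvalHom

theorem stmt5_general (𝒜 : Subalgebra ℂ C(X, A))
    (hconst : ∀ a : A, ContinuousMap.const X a ∈ 𝒜) :
    (∀ ℳ : Ideal ↥𝒜, ℳ.IsMaximal → ∃ (x₀ : X) (M : Ideal A), M.IsMaximal ∧
        ∀ f : ↥𝒜, f ∈ ℳ ↔ (f : C(X, A)) x₀ ∈ M) ↔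
      (∀ ℐ : Ideal ↥𝒜, ℐ ≠ ⊤ →
        ∃ x₀ : X, {a : A | ∃ f ∈ ℐ, (f : C(X, A)) x₀ = a} ≠ Set.univ) := by
  simp only [← map_evalHom_ne_top_iff hconst]
  constructor
  · intro hnatural ℐ hℐ
    obtain ⟨ℳ, hℳ, hℐℳ⟩ := Ideal.exists_le_maximal ℐ hℐ
    obtain ⟨x₀, M, hM, hℳM⟩ := hnatural ℳ hℳ
    exact ⟨x₀, Ideal.map_ne_top_of_le_comap _ hM.ne_top fun f hf => (hℳM f).mp (hℐℳ hf)⟩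
  · intro hproper ℳ hℳ
    obtain ⟨x₀, hx₀⟩ := hproper ℳ hℳ.ne_top
    obtain ⟨M, hM, rfl⟩ := Ideal.exists_isMaximal_comap_eq_of_map_ne_top _ hℳ hx₀
    exact ⟨x₀, M, hM, fun f => Iff.rfl⟩

/-- 𝒜 is natural iff every proper ideal ℐ of 𝒜 has ℐ(x₀) ≠ A for some x₀ ∈ X. -/
theorem stmt5 (𝒜 : Subalgebra ℂ C(X, A))
    (hconst : ∀ a : A, ContinuousMap.const X a ∈ 𝒜)
    (hsep : ∀ x y : X, x ≠ y → ∀ M : Ideal A, M.IsMaximal → ∃ f ∈ 𝒜, f x - f y ∉ M) :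
    (∀ ℳ : Ideal ↥𝒜, ℳ.IsMaximal → ∃ (x₀ : X) (M : Ideal A), M.IsMaximal ∧
        ∀ f : ↥𝒜, f ∈ ℳ ↔ (f : C(X, A)) x₀ ∈ M) ↔
      (∀ ℐ : Ideal ↥𝒜, ℐ ≠ ⊤ →
        ∃ x₀ : X, {a : A | ∃ f ∈ ℐ, (f : C(X, A)) x₀ = a} ≠ Set.univ) :=
  stmt5_general 𝒜 hconst
end
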